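/- arXiv:1910.10372 — 5 statements merged into one kernel-verified Lean document; each statement's English description precedes it below -/
import Mathlib

section
/- The closure of a nonempty LMI region D = {z ∈ ℂ : L + zM + z̄Mᵀ ≺ 0} equals {z ∈ ℂ : L + zM + z̄Mᵀ ⪯ 0}, the set where the Hermitian matrix is negative semidefinite. -/
/-!
The semidefinite region is the preimage of the closed cone of positive semidefinite matrices
under the continuous map `z ↦ -(L + zM + z̄Mᵀ)`, so it contains the closure of `D`. Conversely,
this map is real-affine in `z`: for `z` in the semidefinite region and `w ∈ D`, each point of the
open segment from `z` to `w` gives a positive combination of a semidefinite and a definite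
matrix, hence lies in `D`, and `z` is a limit of such points.
-/

open Matrix Complex
open scoped ComplexOrder

variable {n : Type*} [Fintype n]

/-- The characteristic matrix `L + z M + conj z Mᵀ` of an LMI region, as a complex matrix. -/
noncomputable def lmiMat (L M : Matrix n n ℝ) (z : ℂ) : Matrix n n ℂ :=
  L.map (fun a => (a : ℂ)) + z • M.map (fun a => (a : ℂ)) +
    (starRingEnd ℂ z) • (M.map (fun a => (a : ℂ)))ᵀ

/-- The LMI region determined by `L` and `M`. -/
noncomputable def lmiRegion (L M : Matrix n n ℝ) : Set ℂ :=
  {z : ℂ | (-(lmiMat L M z)).PosDef}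

theorem Matrix.isClosed_setOf_posSemidef {𝕜 : Type*} [RCLike 𝕜] :
    IsClosed {A : Matrix n n 𝕜 | A.PosSemidef} := by
  have : {A : Matrix n n 𝕜 | A.PosSemidef} =
      {A | A.IsHermitian} ∩ ⋂ x : n → 𝕜, {A | 0 ≤ star x ⬝ᵥ A *ᵥ x} := by
    ext A
    simp only [Set.mem_ofPred_eq, Set.mem_inter_iff, Set.mem_iInter,
      posSemidef_iff_dotProduct_mulVec]
  rw [this]
  refine (isClosed_eq continuous_id.matrix_conjTranspose continuous_id).inter
    (isClosed_iInter fun x => isClosed_le continuous_const ?_)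
  fun_prop

omit [Fintype n] in
theorem continuous_lmiMat (L M : Matrix n n ℝ) : Continuous (lmiMat L M) := by
  unfold lmiMat
  fun_prop

omit [Fintype n] in
theorem lmiMat_smul_add_smul (L M : Matrix n n ℝ) {a b : ℝ} (hab : a + b = 1) (z w : ℂ) :
    lmiMat L M (a • z + b • w) = a • lmiMat L M z + b • lmiMat L M w := by
  ext i j
  simp only [lmiMat, Matrix.add_apply, Matrix.smul_apply, Matrix.map_apply, Matrix.transpose_apply,
    map_add, Complex.real_smul, smul_eq_mul, _root_.map_mul, Complex.conj_ofReal]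
  have hab' : (a : ℂ) + b = 1 := by exact_mod_cast hab
  linear_combination -(L i j : ℂ) * hab'

omit [Fintype n] in
theorem openSegment_subset_lmiRegion (L M : Matrix n n ℝ) {z w : ℂ}
    (hz : (-(lmiMat L M z)).PosSemidef) (hw : w ∈ lmiRegion L M) :
    openSegment ℝ z w ⊆ lmiRegion L M := by
  rintro _ ⟨a, b, ha, hb, hab, rfl⟩
  have : -lmiMat L M (a • z + b • w) = a • -lmiMat L M z + b • -lmiMat L M w := by
    rw [lmiMat_smul_add_smul L M hab, smul_neg, smul_neg, neg_add]
  show (-lmiMat L M (a • z + b • w)).PosDef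
  rw [this]
  exact .posSemidef_add (hz.smul ha.le) (hw.smul hb)

theorem lmiRegion_closure_general (L M : Matrix n n ℝ)
    (hne : (lmiRegion L M).Nonempty) :
    closure (lmiRegion L M) = {z : ℂ | (-(lmiMat L M z)).PosSemidef} := by
  have hclosed : IsClosed {z : ℂ | (-(lmiMat L M z)).PosSemidef} :=
    Matrix.isClosed_setOf_posSemidef.preimage (continuous_lmiMat L M).neg
  refine (closure_minimal (fun z hz => hz.posSemidef) hclosed).antisymm fun z hz => ?_
  obtain ⟨w, hw⟩ := hne
  exact closure_mono (openSegment_subset_lmiRegion L M hz hw)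
    (segment_subset_closure_openSegment (left_mem_segment ℝ z w))

/-- The closure of a nonempty LMI region is the corresponding negative semidefinite region. -/
theorem lmiRegion_closure (L M : Matrix n n ℝ) (hL : Lᵀ = L)
    (hne : (lmiRegion L M).Nonempty) :
    closure (lmiRegion L M) = {z : ℂ | (-(lmiMat L M z)).PosSemidef} :=
  lmiRegion_closure_general L M hne
end

section
/- A uniform LMI region D = {z ∈ ℂ : zM + z̄Mᵀ ≺ 0} is nonempty if and only if the symmetric part Sym(M) = (M + Mᵀ)/2 is positive definite or negative definite. -/
open Matrix Complex
open scoped ComplexOrder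

variable {n : Type*} [Fintype n]

/-!
On a real vector `x`, the Hermitian form of `z M + z̄ Mᵀ` is `2 (Re z) xᵀ M x`. So a point `z` of the
region makes `(Re z) xᵀ M x` negative for every real `x ≠ 0`, which fixes the sign of the quadratic
form of `M`, and hence of `Sym(M)`. Conversely, for real `z` the characteristic matrix is the
complexification of `z (M + Mᵀ)`, so `z = ∓1/2` lies in the region when `±Sym(M)` is positive
definite: a symmetric real `S` stays positive definite over `ℂ`, because
`(u + i v)ᴴ S (u + i v) = uᵀ S u + vᵀ S v`.
-/

lemma ofReal_dotProduct_mulVec (S : Matrix n n ℝ) (u v : n → ℝ) :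
    ((u ⬝ᵥ S *ᵥ v : ℝ) : ℂ) = (ofReal ∘ u) ⬝ᵥ S.map ofReal *ᵥ (ofReal ∘ v) := by
  rw [← ofRealHom_eq_coe, RingHom.map_dotProduct]
  congr 1
  funext i
  exact RingHom.map_mulVec ofRealHom S v i

lemma Matrix.PosDef.map_ofReal {S : Matrix n n ℝ} (hS : S.PosDef) : (S.map ofReal).PosDef := by
  refine .of_dotProduct_mulVec_pos ?_ fun x hx => ?_
  · exact hS.1.map _ fun a => (conj_ofReal a).symm
  set u : n → ℝ := fun i => (x i).re
  set v : n → ℝ := fun i => (x i).im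
  have hx_eq : x = ofReal ∘ u + I • (ofReal ∘ v) := by
    funext i; apply Complex.ext <;> simp [u, v]
  have hstar : star x = ofReal ∘ u - I • (ofReal ∘ v) := by
    funext i; apply Complex.ext <;> simp [u, v]
  have hsymm : (ofReal ∘ v) ⬝ᵥ S.map ofReal *ᵥ (ofReal ∘ u)
      = (ofReal ∘ u) ⬝ᵥ S.map ofReal *ᵥ (ofReal ∘ v) := by
    rw [← ofReal_dotProduct_mulVec, ← ofReal_dotProduct_mulVec, ← dotProduct_transpose_mulVec,
      ← conjTranspose_eq_transpose_of_trivial, hS.1.eq]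
  have hquad : star x ⬝ᵥ S.map ofReal *ᵥ x =
      ((u ⬝ᵥ S *ᵥ u + v ⬝ᵥ S *ᵥ v : ℝ) : ℂ) := by
    rw [hstar, hx_eq]
    simp only [mulVec_add, mulVec_smul, sub_dotProduct, dotProduct_add, smul_dotProduct,
      dotProduct_smul, hsymm, ofReal_add, ofReal_dotProduct_mulVec, smul_eq_mul]
    ring_nf
    rw [I_sq]; ring
  rw [hquad, zero_lt_real]
  have huv : u ≠ 0 ∨ v ≠ 0 := by
    by_contra! h
    exact hx (funext fun i => Complex.ext (congrFun h.1 i) (congrFun h.2 i))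
  rcases huv with hu | hv
  · exact add_pos_of_pos_of_nonneg (hS.dotProduct_mulVec_pos hu)
      (hS.posSemidef.dotProduct_mulVec_nonneg v)
  · exact add_pos_of_nonneg_of_pos (hS.posSemidef.dotProduct_mulVec_nonneg u)
      (hS.dotProduct_mulVec_pos hv)

lemma dotProduct_lmiMat_zero_mulVec_ofReal (M : Matrix n n ℝ) (z : ℂ) (x : n → ℝ) :
    star (ofReal ∘ x) ⬝ᵥ lmiMat 0 M z *ᵥ (ofReal ∘ x) =
      ((2 * z.re * (x ⬝ᵥ M *ᵥ x) : ℝ) : ℂ) := by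
  have hstar : star (ofReal ∘ x) = ofReal ∘ x := funext fun i => conj_ofReal (x i)
  have hMt : (M.map ofReal)ᵀ = Mᵀ.map ofReal := transpose_map.symm
  simp only [lmiMat, Matrix.map_zero _ ofReal_zero, zero_add, add_mulVec, smul_mulVec,
    dotProduct_add, dotProduct_smul, hstar, hMt, ← ofReal_dotProduct_mulVec,
    dotProduct_transpose_mulVec, smul_eq_mul]
  rw [← add_mul, add_conj]
  push_cast
  ring

lemma ofReal_mem_lmiRegion_zero {M : Matrix n n ℝ} {r : ℝ} (h : (-(r • (M + Mᵀ))).PosDef) :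
    (r : ℂ) ∈ lmiRegion 0 M := by
  have h_eq : -lmiMat 0 M r = (-(r • (M + Mᵀ))).map ofReal := by
    ext i j
    simp [lmiMat]
  simpa only [lmiRegion, Set.mem_ofPred_eq, h_eq] using h.map_ofReal

lemma re_mul_dotProduct_mulVec_neg_of_mem {M : Matrix n n ℝ} {z : ℂ} (hz : z ∈ lmiRegion 0 M)
    {x : n → ℝ} (hx : x ≠ 0) : z.re * (x ⬝ᵥ M *ᵥ x) < 0 := by
  have hx' : ofReal ∘ x ≠ 0 := fun h => hx (funext fun i => ofReal_eq_zero.1 (congrFun h i))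
  have hpos := hz.dotProduct_mulVec_pos hx'
  rw [neg_mulVec, dotProduct_neg, dotProduct_lmiMat_zero_mulVec_ofReal, ← ofReal_neg,
    zero_lt_real] at hpos
  linarith

lemma posDef_half_smul_add_transpose_of_pos {M : Matrix n n ℝ}
    (h : ∀ x ≠ 0, 0 < x ⬝ᵥ M *ᵥ x) :
    ((1 / 2 : ℝ) • (M + Mᵀ)).PosDef := by
  refine .of_dotProduct_mulVec_pos ?_ fun x hx => ?_
  · simp [IsHermitian, transpose_add, add_comm]
  · rw [star_trivial, smul_mulVec, add_mulVec, dotProduct_smul, dotProduct_add,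
      dotProduct_transpose_mulVec, smul_eq_mul]
    linarith [h x hx]

/-- A uniform LMI region is nonempty iff Sym(M) is positive definite or negative definite. -/
theorem lmiRegion_uniform_nonempty_iff (M : Matrix n n ℝ) :
    (lmiRegion 0 M).Nonempty ↔
      ((1 / 2 : ℝ) • (M + Mᵀ)).PosDef ∨ (-((1 / 2 : ℝ) • (M + Mᵀ))).PosDef := by
  constructor
  · rintro ⟨z, hz⟩
    have hq := fun x (hx : x ≠ 0) => re_mul_dotProduct_mulVec_neg_of_mem hz hx
    rcases le_or_gt z.re 0 with hre | hre
    · exact .inl <| posDef_half_smul_add_transpose_of_pos fun x hx =>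
        pos_of_mul_neg_right (hq x hx) hre
    · refine .inr ?_
      rw [← smul_neg, neg_add, ← transpose_neg]
      refine posDef_half_smul_add_transpose_of_pos fun x hx => ?_
      rw [neg_mulVec, dotProduct_neg, neg_pos]
      exact neg_of_mul_neg_right (hq x hx) hre.le
  · rintro (h | h)
    · exact ⟨_, ofReal_mem_lmiRegion_zero (r := -(1 / 2)) (by rwa [neg_smul, neg_neg])⟩
    · exact ⟨_, ofReal_mem_lmiRegion_zero h⟩
end

section
/- The recession cone of a nonempty LMI region D = {z ∈ ℂ : L + zM + z̄Mᵀ ≺ 0} equals {z ∈ ℂ : zM + z̄Mᵀ ⪯ 0}. That is, z₀ satisfies z₀M + z̄₀Mᵀ ⪯ 0 if and only if w + t·z₀ ∈ D for every w ∈ D and every t ≥ 0. -/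
open Matrix Complex
open scoped ComplexOrder

variable {n : Type*} [Fintype n]

/-! Along a ray, `lmiMat L M (w + t z₀) = lmiMat L M w + t (z₀ M + z̄₀ Mᵀ)` is affine in `t`.
If `-(z₀ M + z̄₀ Mᵀ)` is positive semidefinite, adding `t` times it keeps `-lmiMat L M w` positive
definite. Conversely, fix a point `w` of the region and a vector `x`: the quadratic form of
`-lmiMat L M (w + t z₀)` at `x` is `a + t b ≥ 0` for all `t ≥ 0`; dividing by `t` and letting
`t → ∞` gives `b ≥ 0`. -/

theorem nonneg_of_forall_nonneg_add_smul {E : Type*} [AddCommGroup E] [Module ℝ E] [Preorder E]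
    [PosSMulMono ℝ E] [TopologicalSpace E] [ContinuousSMul ℝ E] [ContinuousAdd E]
    [ClosedIciTopology E] {a b : E} (h : ∀ t : ℝ, 0 ≤ t → 0 ≤ a + t • b) : 0 ≤ b := by
  have hlim : Filter.Tendsto (fun t : ℝ => t⁻¹ • a + b) Filter.atTop (nhds b) := by
    simpa using ((tendsto_inv_atTop_zero (𝕜 := ℝ)).smul_const a).add_const b
  refine ge_of_tendsto hlim ((Filter.eventually_gt_atTop 0).mono fun t ht => ?_)
  have : t⁻¹ • a + b = t⁻¹ • (a + t • b) := by
    rw [smul_add, smul_smul, inv_mul_cancel₀ ht.ne', one_smul]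
  rw [this]
  exact smul_nonneg (inv_nonneg.mpr ht.le) (h t ht.le)

theorem Matrix.PosSemidef.of_forall_posSemidef_add_smul {𝕜 : Type*} [RCLike 𝕜]
    {A B : Matrix n n 𝕜} (hB : B.IsHermitian) (h : ∀ t : ℝ, 0 ≤ t → (A + t • B).PosSemidef) :
    B.PosSemidef :=
  .of_dotProduct_mulVec_nonneg hB fun x => nonneg_of_forall_nonneg_add_smul fun t ht => by
    simpa [add_mulVec, Matrix.smul_mulVec, dotProduct_add] using (h t ht).dotProduct_mulVec_nonneg x

noncomputable def lmiLin (M : Matrix n n ℝ) (z : ℂ) : Matrix n n ℂ :=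
  z • M.map (fun a => (a : ℂ)) + (starRingEnd ℂ z) • (M.map (fun a => (a : ℂ)))ᵀ

omit [Fintype n] in
theorem lmiLin_isHermitian (M : Matrix n n ℝ) (z : ℂ) : (lmiLin M z).IsHermitian := by
  ext i j
  simp [lmiLin, Matrix.conjTranspose_apply, mul_comm, add_comm]

omit [Fintype n] in
theorem neg_lmiMat_add_ofReal_mul (L M : Matrix n n ℝ) (w z : ℂ) (t : ℝ) :
    -lmiMat L M (w + t * z) = -lmiMat L M w + t • -lmiLin M z := by
  simp only [lmiMat, lmiLin, map_add, map_mul, Complex.conj_ofReal]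
  module

theorem lmiRegion_recessionCone_general (L M : Matrix n n ℝ)
    (hne : (lmiRegion L M).Nonempty) (z₀ : ℂ) :
    (-(z₀ • M.map (fun a => (a : ℂ)) +
        (starRingEnd ℂ z₀) • (M.map (fun a => (a : ℂ)))ᵀ)).PosSemidef ↔
      ∀ w ∈ lmiRegion L M, ∀ t : ℝ, 0 ≤ t → w + (t : ℂ) * z₀ ∈ lmiRegion L M := by
  change (-lmiLin M z₀).PosSemidef ↔ _
  constructor
  · intro hz₀ w hw t ht
    change (-lmiMat L M _).PosDef
    rw [neg_lmiMat_add_ofReal_mul]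
    exact hw.add_posSemidef (hz₀.smul ht)
  · intro hrec
    obtain ⟨w, hw⟩ := hne
    refine .of_forall_posSemidef_add_smul (A := -lmiMat L M w) (lmiLin_isHermitian M z₀).neg
      fun t ht => ?_
    rw [← neg_lmiMat_add_ofReal_mul]
    exact (hrec w hw t ht).posSemidef

/-- The recession cone of a nonempty LMI region is the negative semidefinite uniform region. -/
theorem lmiRegion_recessionCone (L M : Matrix n n ℝ) (hL : Lᵀ = L)
    (hne : (lmiRegion L M).Nonempty) (z₀ : ℂ) :
    (-(z₀ • M.map (fun a => (a : ℂ)) +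
        (starRingEnd ℂ z₀) • (M.map (fun a => (a : ℂ)))ᵀ)).PosSemidef ↔
      ∀ w ∈ lmiRegion L M, ∀ t : ℝ, 0 ≤ t → w + (t : ℂ) * z₀ ∈ lmiRegion L M :=
  lmiRegion_recessionCone_general L M hne z₀
end

section
/- If D is a nonempty LMI region defined by L and M with Sym(M) ≠ 0, then M is negative semidefinite (i.e., Sym(M) ⪯ 0) if and only if the recession cone of D contains the nonnegative real axis, i.e., for every w ∈ D and every real x ≥ 0, w + x ∈ D. -/
open Matrix Complex
open scoped ComplexOrder

variable {n : Type*} [Fintype n]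

/-!
Moving along the real axis changes the characteristic matrix linearly,
`-lmiMat L M (w + x) = -lmiMat L M w + 2x • S` with `S = -Sym(M)`, so `w + ℝ≥0 ⊆ D` says that the
positive definite matrix `A = -lmiMat L M w` stays positive definite along the ray `A + ℝ≥0 • S`.
This holds for every such `A` when `S ⪰ 0`. Conversely, if `vᴴ S v < 0` then
`vᴴ (A + x • S) v < 0` for large `x`, so a single point of `D` forces `S ⪰ 0`.
-/

theorem nonneg_of_forall_pos_add_mul {α : Type*} [Field α] [LinearOrder α] [IsStrictOrderedRing α]
    {a b : α} (h : ∀ x : α, 0 ≤ x → 0 < a + x * b) : 0 ≤ b := by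
  by_contra! hb
  have hcancel : |a| / -b * b = -|a| := by
    rw [div_mul_eq_mul_div, div_neg, mul_div_cancel_right₀ _ hb.ne]
  have hpos := h (|a| / -b) (div_nonneg (abs_nonneg a) (neg_nonneg.mpr hb.le))
  linarith [le_abs_self a]

namespace Matrix

variable {𝕜 : Type*} [RCLike 𝕜]

theorem PosSemidef.map_ofReal {S : Matrix n n ℝ} (hS : S.PosSemidef) :
    (S.map ((↑) : ℝ → 𝕜)).PosSemidef := by
  classical
  open scoped MatrixOrder in
  obtain ⟨B, rfl⟩ := CStarAlgebra.nonneg_iff_eq_star_mul_self.mp hS.nonneg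
  have hmap : (star B * B).map ((↑) : ℝ → 𝕜) = (B.map ((↑) : ℝ → 𝕜))ᴴ * B.map (↑) := by
    ext i j
    simp [mul_apply]
  simpa only [hmap] using posSemidef_conjTranspose_mul_self (B.map ((↑) : ℝ → 𝕜))

theorem PosSemidef.of_map_ofReal {S : Matrix n n ℝ} (hS : (S.map ((↑) : ℝ → 𝕜)).PosSemidef) :
    S.PosSemidef := by
  refine .of_dotProduct_mulVec_nonneg ?_ fun v => ?_
  · ext i j
    simpa using congr_fun₂ hS.isHermitian i j
  · have hquad : star (fun i => (v i : 𝕜)) ⬝ᵥ S.map (↑) *ᵥ (fun i => (v i : 𝕜)) =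
        ((star v ⬝ᵥ S *ᵥ v : ℝ) : 𝕜) := by
      simp [dotProduct, mulVec]
    simpa [hquad] using hS.dotProduct_mulVec_nonneg fun i => (v i : 𝕜)

theorem posSemidef_map_ofReal_iff {S : Matrix n n ℝ} :
    (S.map ((↑) : ℝ → 𝕜)).PosSemidef ↔ S.PosSemidef :=
  ⟨.of_map_ofReal, .map_ofReal⟩

theorem posSemidef_iff_forall_posDef_add_smul {A B : Matrix n n 𝕜} (hA : A.PosDef) :
    B.PosSemidef ↔ ∀ x : ℝ, 0 ≤ x → (A + x • B).PosDef := by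
  refine ⟨fun hB x hx => hA.add_posSemidef (hB.smul hx), fun h => ?_⟩
  have hB : B.IsHermitian := by
    simpa using (h 1 zero_le_one).isHermitian.sub hA.isHermitian
  refine .of_dotProduct_mulVec_nonneg hB fun v => ?_
  obtain rfl | hv := eq_or_ne v 0
  · simp
  refine RCLike.nonneg_iff.mpr ⟨nonneg_of_forall_pos_add_mul (a := RCLike.re (star v ⬝ᵥ A *ᵥ v))
    fun x hx => ?_, hB.im_star_dotProduct_mulVec_self v⟩
  simpa [add_mulVec, smul_mulVec, dotProduct_add, dotProduct_smul, RCLike.smul_re] using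
    (h x hx).re_dotProduct_pos hv

end Matrix

omit [Fintype n] in
theorem neg_lmiMat_add_ofReal (L M : Matrix n n ℝ) (w : ℂ) (x : ℝ) :
    -lmiMat L M (w + x) =
      -lmiMat L M w + (2 * x) • (-((1 / 2 : ℝ) • (M + Mᵀ))).map ((↑) : ℝ → ℂ) := by
  ext i j
  simp only [lmiMat, Matrix.neg_apply, Matrix.add_apply, Matrix.smul_apply, map_apply,
    transpose_apply, smul_eq_mul, real_smul, map_add, conj_ofReal]
  push_cast
  ring

theorem lmiRegion_negSemidef_iff_recession_real_general (L M : Matrix n n ℝ)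
    (hne : (lmiRegion L M).Nonempty) :
    (-((1 / 2 : ℝ) • (M + Mᵀ))).PosSemidef ↔
      ∀ w ∈ lmiRegion L M, ∀ x : ℝ, 0 ≤ x → w + (x : ℂ) ∈ lmiRegion L M := by
  simp only [lmiRegion, Set.mem_ofPred_eq, neg_lmiMat_add_ofReal]
  rw [← posSemidef_map_ofReal_iff (𝕜 := ℂ)]
  refine ⟨fun hS w hw x hx => ?_, fun hrec => ?_⟩
  · exact (posSemidef_iff_forall_posDef_add_smul hw).mp hS _ (by positivity)
  · obtain ⟨w, hw⟩ := hne
    refine (posSemidef_iff_forall_posDef_add_smul hw).mpr fun x hx => ?_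
    have hx2 := hrec w hw (x / 2) (by positivity)
    rwa [mul_div_cancel₀ x two_ne_zero] at hx2

/-- For a nonempty LMI region with nonzero Sym(M): M is negative semidefinite iff the
recession cone contains the nonnegative real axis. -/
theorem lmiRegion_negSemidef_iff_recession_real (L M : Matrix n n ℝ) (hL : Lᵀ = L)
    (hSym : (1 / 2 : ℝ) • (M + Mᵀ) ≠ 0) (hne : (lmiRegion L M).Nonempty) :
    (-((1 / 2 : ℝ) • (M + Mᵀ))).PosSemidef ↔
      ∀ w ∈ lmiRegion L M, ∀ x : ℝ, 0 ≤ x → w + (x : ℂ) ∈ lmiRegion L M :=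
  lmiRegion_negSemidef_iff_recession_real_general L M hne
end

section
/- A nonempty LMI region intersects the real axis: if D = {z ∈ ℂ : L + zM + z̄Mᵀ ≺ 0} is nonempty, then there exists a real x with L + 2x·Sym(M) ≺ 0 (as a real symmetric matrix), i.e., D ∩ ℝ ≠ ∅; moreover D ∩ ℝ = {x ∈ ℝ : L + 2x·Sym(M) ≺ 0}. -/
/-!
On the real axis the characteristic matrix is the complexification of the real symmetric matrix
`L + x (M + Mᵀ)`, and complexification preserves and reflects positive definiteness: for
`x = u + i v` one has `Re (x̄ᵀ A x) = uᵀ A u + vᵀ A v`, while `x̄ᵀ A x` is real for Hermitian `A`.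

The region is convex, being the preimage of the positive definite cone under the real-affine map
`z ↦ -(L + z M + z̄ Mᵀ)`, and it is invariant under conjugation, since `L` and `M` are real and the
characteristic matrix at `z̄` is the entrywise conjugate of the one at `z`. Hence with `z` the
region also contains `Re z = (z + z̄) / 2`.
-/

open Matrix Complex
open scoped ComplexOrder

variable {n : Type*} [Fintype n]

section

variable {ι : Type*}

theorem Matrix.re_star_dotProduct_map_ofReal_mulVec [Fintype ι] (A : Matrix ι ι ℝ)
    (x : ι → ℂ) :
    (star x ⬝ᵥ A.map (fun a => (a : ℂ)) *ᵥ x).re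
      = (re ∘ x) ⬝ᵥ A *ᵥ (re ∘ x) + (im ∘ x) ⬝ᵥ A *ᵥ (im ∘ x) := by
  simp only [dotProduct, mulVec, Finset.mul_sum, ← Finset.sum_add_distrib, re_sum]
  refine Finset.sum_congr rfl fun i _ => Finset.sum_congr rfl fun j _ => ?_
  simp only [Pi.star_apply, map_apply, Function.comp_apply, mul_re, RCLike.star_def, conj_re,
    conj_im, ofReal_re, ofReal_im, im_ofReal_mul]
  ring

theorem Matrix.posDef_map_ofReal_iff [Fintype ι] {A : Matrix ι ι ℝ} :
    (A.map (fun a => (a : ℂ))).PosDef ↔ A.PosDef := by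
  have hconj : Function.Semiconj (fun a : ℝ => (a : ℂ)) star star :=
    fun a => (conj_ofReal a).symm
  constructor
  · intro h
    refine .of_dotProduct_mulVec_pos
      ((isHermitian_map_iff hconj ofReal_injective).mp h.isHermitian) fun u hu => ?_
    have hu' : (fun i => (u i : ℂ)) ≠ 0 := by simpa [funext_iff] using hu
    simpa [re_star_dotProduct_map_ofReal_mulVec, Function.comp_def] using
      (pos_iff.mp (h.dotProduct_mulVec_pos hu')).1
  · intro h
    have hherm := h.isHermitian.map _ hconj
    refine .of_dotProduct_mulVec_pos hherm fun x hx =>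
      pos_iff.mpr ⟨?_, (hherm.im_star_dotProduct_mulVec_self x).symm⟩
    have hquad (u : ι → ℝ) : 0 ≤ u ⬝ᵥ A *ᵥ u := by
      simpa using h.posSemidef.dotProduct_mulVec_nonneg u
    rw [re_star_dotProduct_map_ofReal_mulVec]
    obtain hre | him : re ∘ x ≠ 0 ∨ im ∘ x ≠ 0 := by
      by_contra! h0
      exact hx (funext fun i => Complex.ext (congrFun h0.1 i) (congrFun h0.2 i))
    · exact add_pos_of_pos_of_nonneg (by simpa using h.dotProduct_mulVec_pos hre) (hquad _)
    · exact add_pos_of_nonneg_of_pos (hquad _) (by simpa using h.dotProduct_mulVec_pos him)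

theorem mem_lmiRegion {L M : Matrix ι ι ℝ} {z : ℂ} :
    z ∈ lmiRegion L M ↔ (-(lmiMat L M z)).PosDef :=
  Iff.rfl

theorem lmiMat_ofReal (L M : Matrix ι ι ℝ) (x : ℝ) :
    lmiMat L M x = (L + x • (M + Mᵀ)).map (fun a => (a : ℂ)) := by
  ext i j
  simp [lmiMat]
  ring

theorem lmiMat_conj (L M : Matrix ι ι ℝ) (z : ℂ) :
    lmiMat L M (starRingEnd ℂ z) = (lmiMat L M z).map star := by
  ext i j
  simp [lmiMat]

theorem lmiMat_add_smul (L M : Matrix ι ι ℝ) (z w : ℂ) {a b : ℝ} (hab : a + b = 1) :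
    lmiMat L M (a • z + b • w) = a • lmiMat L M z + b • lmiMat L M w := by
  ext i j
  have hab' : (a : ℂ) + b = 1 := by exact_mod_cast hab
  simp [lmiMat, Complex.real_smul]
  linear_combination -(L i j : ℂ) * hab'

theorem convex_lmiRegion (L M : Matrix ι ι ℝ) : Convex ℝ (lmiRegion L M) := by
  refine convex_iff_forall_pos.mpr fun z hz w hw a b ha hb hab => ?_
  rw [mem_lmiRegion, lmiMat_add_smul L M z w hab, neg_add, ← smul_neg, ← smul_neg]
  exact (hz.smul ha).add (hw.smul hb)

theorem conj_mem_lmiRegion {L M : Matrix ι ι ℝ} {z : ℂ} (hz : z ∈ lmiRegion L M) :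
    starRingEnd ℂ z ∈ lmiRegion L M := by
  rw [mem_lmiRegion, lmiMat_conj, ← Matrix.map_neg _ star_neg]
  exact (PosDef.transpose hz).conjTranspose

theorem ofReal_re_mem_lmiRegion {L M : Matrix ι ι ℝ} {z : ℂ} (hz : z ∈ lmiRegion L M) :
    (z.re : ℂ) ∈ lmiRegion L M := by
  have hmid : (z.re : ℂ) = (1 / 2 : ℝ) • z + (1 / 2 : ℝ) • starRingEnd ℂ z := by
    refine Complex.ext ?_ (by simp)
    simp only [ofReal_re, add_re, real_smul, mul_re, ofReal_im, zero_mul, sub_zero, conj_re]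
    ring
  rw [hmid]
  exact convex_lmiRegion L M hz (conj_mem_lmiRegion hz) (by norm_num) (by norm_num) (by norm_num)

theorem ofReal_mem_lmiRegion_iff [Fintype ι] (L M : Matrix ι ι ℝ) (x : ℝ) :
    (x : ℂ) ∈ lmiRegion L M ↔ (-(L + x • (M + Mᵀ))).PosDef := by
  rw [mem_lmiRegion, lmiMat_ofReal, ← Matrix.map_neg _ ofReal_neg, posDef_map_ofReal_iff]

end

theorem lmiRegion_real_trace_general (L M : Matrix n n ℝ)
    (hne : (lmiRegion L M).Nonempty) :
    (∃ x : ℝ, (x : ℂ) ∈ lmiRegion L M) ∧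
      ∀ x : ℝ, ((x : ℂ) ∈ lmiRegion L M ↔
        (-(L + (2 * x) • ((1 / 2 : ℝ) • (M + Mᵀ)))).PosDef) := by
  obtain ⟨z, hz⟩ := hne
  refine ⟨⟨z.re, ofReal_re_mem_lmiRegion hz⟩, fun x => ?_⟩
  rw [smul_smul, show 2 * x * (1 / 2 : ℝ) = x by ring]
  exact ofReal_mem_lmiRegion_iff L M x

/-- A nonempty LMI region intersects the real axis, and its real trace is
{x : L + 2x·Sym(M) ≺ 0}. -/
theorem lmiRegion_real_trace (L M : Matrix n n ℝ) (hL : Lᵀ = L)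
    (hne : (lmiRegion L M).Nonempty) :
    (∃ x : ℝ, (x : ℂ) ∈ lmiRegion L M) ∧
      ∀ x : ℝ, ((x : ℂ) ∈ lmiRegion L M ↔
        (-(L + (2 * x) • ((1 / 2 : ℝ) • (M + Mᵀ)))).PosDef) :=
  lmiRegion_real_trace_general L M hne
end
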